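/- arXiv:0806.0434 — 2 statements merged into one kernel-verified Lean document; each statement's English description precedes it below -/
import Mathlib

section
/- Let n ≥ 3. The reduced Euler characteristic χ̃(P_n) = Σ_{i=0}^{⌊(n−1)/2⌋} (−1)^{i−1} p_{n,i−1} satisfies: χ̃(P_n) = 0 if n is odd, and χ̃(P_n) = (2·(−1)^{n/2}/n) · C(n−2, (n−2)/2) if n is even. -/
open Finset Polynomial

/-- `σ` is a permutation of `[n] = {1, …, n}` (viewed as a function `ℕ → ℕ`
restricted to a bijection of `{1, …, n}` onto itself). -/
def IsPermOn (n : ℕ) (σ : ℕ → ℕ) : Prop :=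
  Set.BijOn σ (Set.Icc 1 n) (Set.Icc 1 n)

/-- The circular peak set of `σ` (as a permutation of `[n]`):
`CP(σ) = {σ(i) : 2 ≤ i ≤ n−1, σ(i−1) < σ(i) > σ(i+1)}`. -/
def CP (n : ℕ) (σ : ℕ → ℕ) : Finset ℕ :=
  ((Finset.Icc 2 (n - 1)).filter (fun i => σ (i - 1) < σ i ∧ σ (i + 1) < σ i)).image σ

open scoped Classical in
/-- `Pn n` is the collection of all subsets `S ⊆ [n]` arising as the circular peak
set of some permutation of `[n]`. -/
noncomputable def Pn (n : ℕ) : Finset (Finset ℕ) :=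
  (Finset.Icc 1 n).powerset.filter (fun S => ∃ σ : ℕ → ℕ, IsPermOn n σ ∧ CP n σ = S)

/-- `pcount n k` is the number of members of `Pn n` of cardinality `k`;
in the paper's notation, `p_{n,i} = pcount n (i+1)`. -/
noncomputable def pcount (n k : ℕ) : ℕ :=
  ((Pn n).filter (fun S => S.card = k)).card

/-- The f-polynomial `P_n(x) = Σ_{i=0}^{⌊(n−1)/2⌋} p_{n,i−1} x^{⌊(n−1)/2⌋−i}`. -/
noncomputable def fpoly (n : ℕ) : Polynomial ℚ :=
  ∑ i ∈ Finset.range ((n - 1) / 2 + 1),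
    Polynomial.C (pcount n i : ℚ) * Polynomial.X ^ ((n - 1) / 2 - i)


/-- ordered enumeration of a finset of naturals, 0-indexed; 0 out of range -/
noncomputable def enumF (A : Finset ℕ) (j : ℕ) : ℕ :=
  if h : j < A.card then (A.orderIsoOfFin rfl ⟨j, h⟩ : ℕ) else 0

lemma enumF_mem {A : Finset ℕ} {j : ℕ} (h : j < A.card) : enumF A j ∈ A := by
  simp only [enumF, dif_pos h]
  exact (A.orderIsoOfFin rfl ⟨j, h⟩).2

lemma enumF_strictMono {A : Finset ℕ} {i j : ℕ} (hij : i < j) (hj : j < A.card) :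
    enumF A i < enumF A j := by
  have hi : i < A.card := lt_trans hij hj
  simp only [enumF, dif_pos hi, dif_pos hj]
  exact_mod_cast (A.orderIsoOfFin rfl).strictMono (show (⟨i,hi⟩ : Fin A.card) < ⟨j,hj⟩ from hij)

lemma enumF_inj {A : Finset ℕ} {i j : ℕ} (hi : i < A.card) (hj : j < A.card)
    (h : enumF A i = enumF A j) : i = j := by
  rcases lt_trichotomy i j with hc | hc | hc
  · exact absurd h (enumF_strictMono hc hj).ne
  · exact hc
  · exact absurd h.symm (enumF_strictMono hc hi).ne

lemma enumF_surj {A : Finset ℕ} {a : ℕ} (ha : a ∈ A) : ∃ j < A.card, enumF A j = a := by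
  obtain ⟨i, hi⟩ := (A.orderIsoOfFin rfl).surjective ⟨a, ha⟩
  exact ⟨i.1, i.2, by simp only [enumF, dif_pos i.2, hi]⟩

lemma enumF_image {A : Finset ℕ} : (Finset.range A.card).image (enumF A) = A := by
  apply Finset.eq_of_subset_of_card_le
  · intro x hx
    simp only [mem_image, mem_range] at hx
    obtain ⟨j, hj, rfl⟩ := hx
    exact enumF_mem hj
  · rw [Finset.card_image_of_injOn (fun i hi j hj h => enumF_inj (mem_range.1 hi) (mem_range.1 hj) h),
      Finset.card_range]

/-- if at least j+1 elements of A are < x, then enumF A j < x -/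
lemma enumF_lt_of_count {A : Finset ℕ} {x j : ℕ} (h : j + 1 ≤ (A.filter (· < x)).card) :
    enumF A j < x := by
  have hj : j < A.card := lt_of_lt_of_le h (Finset.card_filter_le _ _)
  by_contra hle
  push_neg at hle
  have hsub : A.filter (· < x) ⊆ (Finset.range j).image (enumF A) := by
    intro a ha
    simp only [mem_filter] at ha
    obtain ⟨i, hi, rfl⟩ := enumF_surj ha.1
    have : i < j := by
      by_contra hij
      push_neg at hij
      rcases eq_or_lt_of_le hij with rfl | hij
      · exact absurd ha.2 (not_lt.2 hle)
      · exact absurd ha.2 (not_lt.2 (le_trans hle (enumF_strictMono hij hi).le))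
    exact mem_image.2 ⟨i, mem_range.2 this, rfl⟩
  have h2 := le_trans h (Finset.card_le_card hsub)
  have h3 := le_trans h2 Finset.card_image_le
  rw [Finset.card_range] at h3
  omega

/-- count of elements ≤ enumF A j -/
lemma enumF_filter_le {A : Finset ℕ} {j : ℕ} (hj : j < A.card) :
    (A.filter (· ≤ enumF A j)).card = j + 1 := by
  have : A.filter (· ≤ enumF A j) = (Finset.range (j+1)).image (enumF A) := by
    ext a
    simp only [mem_filter, mem_image, mem_range]
    constructor
    · rintro ⟨ha, hle⟩
      obtain ⟨i, hi, rfl⟩ := enumF_surj ha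
      refine ⟨i, ?_, rfl⟩
      by_contra hij
      push_neg at hij
      exact absurd hle (not_le.2 (enumF_strictMono (by omega) hi))
    · rintro ⟨i, hi, rfl⟩
      refine ⟨enumF_mem (by omega), ?_⟩
      rcases eq_or_lt_of_le (Nat.lt_succ_iff.1 hi) with rfl | hij
      · exact le_refl _
      · exact (enumF_strictMono hij hj).le
  rw [this, Finset.card_image_of_injOn (fun a ha b hb h => enumF_inj (by have := mem_range.1 ha; omega) (by have := mem_range.1 hb; omega) h), Finset.card_range]

def PCond (S : Finset ℕ) : Prop := ∀ s ∈ S, 2 * (S.filter (· ≤ s)).card + 1 ≤ s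

lemma pcond_of_CP {n : ℕ} {σ : ℕ → ℕ} (hn : 3 ≤ n) (hσ : IsPermOn n σ) : PCond (CP n σ) := by
  intro s hs
  classical
  -- peak positions
  set PS : Finset ℕ := (Finset.Icc 2 (n - 1)).filter (fun i => σ (i - 1) < σ i ∧ σ (i + 1) < σ i) with hPS
  have hPSsub : ∀ p ∈ PS, 2 ≤ p ∧ p ≤ n - 1 := by
    intro p hp
    have := (Finset.mem_filter.1 hp).1
    exact Finset.mem_Icc.1 this
  have hinj : Set.InjOn σ (Set.Icc 1 n) := hσ.injOn
  have hPSicc : ∀ p ∈ PS, p ∈ Set.Icc 1 n := by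
    intro p hp
    obtain ⟨h1, h2⟩ := hPSsub p hp
    exact Set.mem_Icc.2 ⟨by omega, by omega⟩
  -- CP = image σ PS
  have hCP : CP n σ = PS.image σ := rfl
  -- Q : peaks with value ≤ s
  set Q : Finset ℕ := PS.filter (fun p => σ p ≤ s) with hQ
  -- card of filter = card Q
  have himg : (CP n σ).filter (· ≤ s) = Q.image σ := by
    rw [hCP]
    ext x
    simp only [Finset.mem_filter, Finset.mem_image]
    constructor
    · rintro ⟨⟨p, hp, rfl⟩, hle⟩
      exact ⟨p, Finset.mem_filter.2 ⟨hp, hle⟩, rfl⟩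
    · rintro ⟨p, hp, rfl⟩
      have hp' := Finset.mem_filter.1 hp
      exact ⟨⟨p, hp'.1, rfl⟩, hp'.2⟩
  have hcardQ : ((CP n σ).filter (· ≤ s)).card = Q.card := by
    rw [himg]
    apply Finset.card_image_of_injOn
    intro a ha b hb hab
    exact hinj (hPSicc a (Finset.mem_filter.1 ha).1) (hPSicc b (Finset.mem_filter.1 hb).1) hab
  rw [hcardQ]
  -- Q nonempty (contains a peak with value s)
  obtain ⟨p₀, hp₀, hσp₀⟩ := Finset.mem_image.1 (show s ∈ PS.image σ from hCP ▸ hs)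
  have hQne : Q.Nonempty := ⟨p₀, Finset.mem_filter.2 ⟨hp₀, le_of_eq hσp₀⟩⟩
  set p1 := Q.min' hQne with hp1
  have hp1Q : p1 ∈ Q := Q.min'_mem hQne
  -- the big set A
  set A : Finset ℕ := Q ∪ Q.image (· + 1) ∪ {p1 - 1} with hA
  have hQprop : ∀ p ∈ Q, 2 ≤ p ∧ p ≤ n - 1 ∧ σ (p-1) < σ p ∧ σ (p+1) < σ p ∧ σ p ≤ s := by
    intro p hp
    have h1 := Finset.mem_filter.1 hp
    have h2 := Finset.mem_filter.1 h1.1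
    obtain ⟨ha, hb⟩ := Finset.mem_Icc.1 h2.1
    exact ⟨ha, hb, h2.2.1, h2.2.2, h1.2⟩
  -- disjointness: Q and Q+1
  have hdisj1 : Disjoint Q (Q.image (· + 1)) := by
    rw [Finset.disjoint_right]
    intro p hp1' hp2'
    obtain ⟨q, hq, hqe⟩ := Finset.mem_image.1 hp1'
    -- q and q+1 = p both peaks: contradiction
    obtain ⟨_, _, _, hq4, _⟩ := hQprop q hq
    obtain ⟨_, _, hp3, _, _⟩ := hQprop p hp2'
    rw [← hqe] at hp3
    simp at hp3
    omega
  have hp1ne : p1 - 1 ∉ Q ∪ Q.image (· + 1) := by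
    intro hmem
    rcases Finset.mem_union.1 hmem with h | h
    · have := Q.min'_le _ h
      have h2 := (hQprop p1 hp1Q).1
      omega
    · obtain ⟨q, hq, hqe⟩ := Finset.mem_image.1 h
      have := Q.min'_le _ hq
      have h2 := (hQprop p1 hp1Q).1
      omega
  have hcardA : A.card = 2 * Q.card + 1 := by
    rw [hA, Finset.union_comm _ {p1 - 1}, ← Finset.insert_eq,
      Finset.card_insert_of_notMem hp1ne, Finset.card_union_of_disjoint hdisj1,
      Finset.card_image_of_injective _ (add_left_injective 1)]
    ring
  -- A ⊆ positions in [1,n], σ maps A into [1,s], injectively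
  have hApos : ∀ a ∈ A, a ∈ Set.Icc 1 n ∧ σ a ≤ s := by
    intro a ha
    rw [hA] at ha
    rcases Finset.mem_union.1 ha with h | h
    · rcases Finset.mem_union.1 h with h | h
      · obtain ⟨h1, h2, _, _, h5⟩ := hQprop a h
        exact ⟨Set.mem_Icc.2 ⟨by omega, by omega⟩, h5⟩
      · obtain ⟨q, hq, rfl⟩ := Finset.mem_image.1 h
        obtain ⟨h1, h2, _, h4, h5⟩ := hQprop q hq
        exact ⟨Set.mem_Icc.2 ⟨by omega, by omega⟩, by omega⟩
    · have : a = p1 - 1 := Finset.mem_singleton.1 h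
      obtain ⟨h1, h2, h3, _, h5⟩ := hQprop p1 hp1Q
      subst this
      exact ⟨Set.mem_Icc.2 ⟨by omega, by omega⟩, by omega⟩
  have hsub : A.image σ ⊆ Finset.Icc 1 s := by
    intro x hx
    obtain ⟨a, ha, rfl⟩ := Finset.mem_image.1 hx
    have h1 := hApos a ha
    have h2 := hσ.mapsTo h1.1
    rw [Set.mem_Icc] at h2
    exact Finset.mem_Icc.2 ⟨h2.1, h1.2⟩
  have hcardim : (A.image σ).card = A.card :=
    Finset.card_image_of_injOn (fun a ha b hb hab => hinj (hApos a ha).1 (hApos b hb).1 hab)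
  have := Finset.card_le_card hsub
  rw [hcardim, hcardA] at this
  simp at this
  omega

noncomputable def permOf (n : ℕ) (S : Finset ℕ) : ℕ → ℕ :=
  fun i =>
    if i - 1 < 2 * S.card then
      if (i - 1) % 2 = 1 then enumF S ((i - 1) / 2)
      else enumF (Finset.Icc 1 n \ S) ((i - 1) / 2)
    else enumF (Finset.Icc 1 n \ S) (i - 1 - S.card)

section suff
variable {n : ℕ} {S : Finset ℕ}

lemma card_compl (hS : S ⊆ Finset.Icc 1 n) : (Finset.Icc 1 n \ S).card = n - S.card := by
  rw [Finset.card_sdiff_of_subset hS, Nat.card_Icc]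
  omega

lemma two_card_lt (hS : S ⊆ Finset.Icc 1 n) (hc : PCond S) (hn : 3 ≤ n) :
    2 * S.card + 1 ≤ n := by
  rcases Finset.eq_empty_or_nonempty S with rfl | hne
  · simp; omega
  · have hmax := S.max'_mem hne
    have h1 := hc _ hmax
    have h2 : S.filter (· ≤ S.max' hne) = S := by
      apply Finset.filter_true_of_mem
      intro x hx
      exact S.le_max' x hx
    rw [h2] at h1
    have h3 := Finset.mem_Icc.1 (hS hmax)
    omega

/-- key: the (j+1)-st smallest complement element is below the j-th smallest of S -/
lemma key_lt (hS : S ⊆ Finset.Icc 1 n) (hc : PCond S) {j : ℕ} (hj : j < S.card) :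
    j + 2 ≤ ((Finset.Icc 1 n \ S).filter (· < enumF S j)).card := by
  set s := enumF S j with hs
  have hsS : s ∈ S := enumF_mem hj
  have hsn : s ≤ n := (Finset.mem_Icc.1 (hS hsS)).2
  have hcount : (S.filter (· ≤ s)).card = j + 1 := enumF_filter_le hj
  have hcond : 2 * (j + 1) + 1 ≤ s := by
    have := hc s hsS
    rw [hcount] at this
    exact this
  -- #elements of [1,n] below s
  have hIcc : (Finset.Icc 1 n).filter (· < s) = Finset.Icc 1 (s - 1) := by
    ext x
    simp only [Finset.mem_filter, Finset.mem_Icc]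
    omega
  have hsplit : (Finset.Icc 1 n).filter (· < s) ⊆
      S.filter (· < s) ∪ (Finset.Icc 1 n \ S).filter (· < s) := by
    intro x hx
    have hx' := Finset.mem_filter.1 hx
    by_cases hxS : x ∈ S
    · exact Finset.mem_union.2 (Or.inl (Finset.mem_filter.2 ⟨hxS, hx'.2⟩))
    · exact Finset.mem_union.2 (Or.inr (Finset.mem_filter.2 ⟨Finset.mem_sdiff.2 ⟨hx'.1, hxS⟩, hx'.2⟩))
  have hSlt : (S.filter (· < s)).card ≤ j := by
    have hsub : S.filter (· < s) ⊆ (S.filter (· ≤ s)).erase s := by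
      intro x hx
      have hx' := Finset.mem_filter.1 hx
      exact Finset.mem_erase.2 ⟨by omega, Finset.mem_filter.2 ⟨hx'.1, hx'.2.le⟩⟩
    have := Finset.card_le_card hsub
    have hmem : s ∈ S.filter (· ≤ s) := Finset.mem_filter.2 ⟨hsS, le_refl s⟩
    rw [Finset.card_erase_of_mem hmem, hcount] at this
    omega
  have h1 := Finset.card_le_card hsplit
  have h2 := Finset.card_union_le (S.filter (· < s)) ((Finset.Icc 1 n \ S).filter (· < s))
  rw [hIcc] at h1
  rw [Nat.card_Icc] at h1
  omega

lemma c_lt_s (hS : S ⊆ Finset.Icc 1 n) (hc : PCond S) {j : ℕ} (hj : j < S.card) :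
    enumF (Finset.Icc 1 n \ S) (j+1) < enumF S j ∧
    enumF (Finset.Icc 1 n \ S) j < enumF S j := by
  have h := key_lt hS hc hj
  exact ⟨enumF_lt_of_count (by omega), enumF_lt_of_count (by omega)⟩

-- value lemmas
lemma val_peak {j : ℕ} (hj : j < S.card) : permOf n S (2*j+2) = enumF S j := by
  unfold permOf
  rw [if_pos (by omega), if_pos (by omega)]
  congr 1
  omega

lemma val_valley {j : ℕ} (hj : j < S.card) :
    permOf n S (2*j+1) = enumF (Finset.Icc 1 n \ S) j := by
  unfold permOf
  rw [if_pos (by omega), if_neg (by omega)]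
  congr 1
  omega

lemma val_tail {i : ℕ} (hi : 2*S.card + 1 ≤ i) :
    permOf n S i = enumF (Finset.Icc 1 n \ S) (i - 1 - S.card) := by
  unfold permOf
  rw [if_neg (by omega)]

lemma val_after_peak {j : ℕ} (hj : j < S.card) :
    permOf n S (2*j+3) = enumF (Finset.Icc 1 n \ S) (j+1) := by
  rcases Nat.lt_or_ge (j+1) S.card with h | h
  · have := val_valley (n := n) h
    rw [show 2*(j+1)+1 = 2*j+3 by ring] at this
    exact this
  · have hjk : j + 1 = S.card := by omega
    rw [val_tail (by omega)]
    congr 1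
    omega

lemma classify (k : ℕ) {i : ℕ} (hi : 1 ≤ i) :
    (∃ j, j < k ∧ i = 2*j+2) ∨ (∃ j, j < k ∧ i = 2*j+1) ∨ (2*k+1 ≤ i) := by
  rcases Nat.lt_or_ge i (2*k+1) with h | h
  · rcases Nat.even_or_odd i with ⟨j, hj⟩ | ⟨j, hj⟩
    · exact Or.inl ⟨j-1, by omega, by omega⟩
    · exact Or.inr (Or.inl ⟨j, by omega, by omega⟩)
  · exact Or.inr (Or.inr h)

lemma permOf_isPermOn (hS : S ⊆ Finset.Icc 1 n) (hc : PCond S) (hn : 3 ≤ n) :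
    IsPermOn n (permOf n S) := by
  have hm : (Finset.Icc 1 n \ S).card = n - S.card := card_compl hS
  have hkn : 2 * S.card + 1 ≤ n := two_card_lt hS hc hn
  have hCsub : (Finset.Icc 1 n \ S) ⊆ Finset.Icc 1 n := Finset.sdiff_subset
  -- maps to
  have hmaps : ∀ i, 1 ≤ i → i ≤ n → permOf n S i ∈ Finset.Icc 1 n := by
    intro i h1 h2
    rcases classify S.card h1 with ⟨j, hj, rfl⟩ | ⟨j, hj, rfl⟩ | h
    · rw [val_peak hj]; exact hS (enumF_mem hj)
    · rw [val_valley hj]; exact hCsub (enumF_mem (by omega))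
    · rw [val_tail h]; exact hCsub (enumF_mem (by omega))
  -- injective on
  have hinj : Set.InjOn (permOf n S) (Set.Icc 1 n) := by
    intro a ha b hb hab
    rw [Set.mem_Icc] at ha hb
    have hmemS : ∀ x, x ∈ S → x ∈ Finset.Icc 1 n \ S → False := by
      intro x hx hx'
      exact absurd hx (Finset.mem_sdiff.1 hx').2
    rcases classify S.card ha.1 with ⟨j, hj, rfl⟩ | ⟨j, hj, rfl⟩ | h <;>
      rcases classify S.card hb.1 with ⟨j', hj', rfl⟩ | ⟨j', hj', rfl⟩ | h'
    · rw [val_peak hj, val_peak hj'] at hab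
      have := enumF_inj hj hj' hab
      omega
    · rw [val_peak hj, val_valley hj'] at hab
      exact absurd (hab ▸ enumF_mem hj) (fun hx => hmemS _ hx (enumF_mem (by omega)))
    · rw [val_peak hj, val_tail h'] at hab
      exact absurd (hab ▸ enumF_mem hj) (fun hx => hmemS _ hx (enumF_mem (by omega)))
    · rw [val_valley hj, val_peak hj'] at hab
      exact absurd (hab.symm ▸ enumF_mem hj') (fun hx => hmemS _ hx (enumF_mem (by omega)))
    · rw [val_valley hj, val_valley hj'] at hab
      have := enumF_inj (A := Finset.Icc 1 n \ S) (by omega) (by omega) hab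
      omega
    · rw [val_valley hj, val_tail h'] at hab
      have := enumF_inj (A := Finset.Icc 1 n \ S) (by omega) (by omega) hab
      omega
    · rw [val_tail h, val_peak hj'] at hab
      exact absurd (hab.symm ▸ enumF_mem hj') (fun hx => hmemS _ hx (enumF_mem (by omega)))
    · rw [val_tail h, val_valley hj'] at hab
      have := enumF_inj (A := Finset.Icc 1 n \ S) (by omega) (by omega) hab
      omega
    · rw [val_tail h, val_tail h'] at hab
      have := enumF_inj (A := Finset.Icc 1 n \ S) (by omega) (by omega) hab
      omega
  -- image equality
  have himg : (Finset.Icc 1 n).image (permOf n S) = Finset.Icc 1 n := by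
    apply Finset.eq_of_subset_of_card_le
    · intro x hx
      obtain ⟨i, hi, rfl⟩ := Finset.mem_image.1 hx
      have hi' := Finset.mem_Icc.1 hi
      exact hmaps i hi'.1 hi'.2
    · rw [Finset.card_image_of_injOn (fun a ha b hb hab =>
        hinj (by simpa using Finset.mem_Icc.1 ha) (by simpa using Finset.mem_Icc.1 hb) hab)]
  refine ⟨?_, hinj, ?_⟩
  · intro i hi
    rw [Set.mem_Icc] at hi
    have := hmaps i hi.1 hi.2
    rw [Finset.mem_Icc] at this
    exact Set.mem_Icc.2 this
  · intro y hy
    rw [Set.mem_Icc] at hy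
    have : y ∈ (Finset.Icc 1 n).image (permOf n S) := by
      rw [himg]; exact Finset.mem_Icc.2 hy
    obtain ⟨i, hi, rfl⟩ := Finset.mem_image.1 this
    have hi' := Finset.mem_Icc.1 hi
    exact ⟨i, Set.mem_Icc.2 hi', rfl⟩

lemma permOf_CP (hS : S ⊆ Finset.Icc 1 n) (hc : PCond S) (hn : 3 ≤ n) :
    CP n (permOf n S) = S := by
  have hm : (Finset.Icc 1 n \ S).card = n - S.card := card_compl hS
  have hkn : 2 * S.card + 1 ≤ n := two_card_lt hS hc hn
  have hpeaks : (Finset.Icc 2 (n - 1)).filter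
      (fun i => permOf n S (i - 1) < permOf n S i ∧ permOf n S (i + 1) < permOf n S i) =
      (Finset.range S.card).image (fun j => 2*j+2) := by
    ext i
    simp only [Finset.mem_filter, Finset.mem_Icc, Finset.mem_image, Finset.mem_range]
    constructor
    · rintro ⟨⟨h2, h3⟩, hpk⟩
      rcases classify S.card (show 1 ≤ i by omega) with ⟨j, hj, rfl⟩ | ⟨j, hj, rfl⟩ | h
      · exact ⟨j, hj, rfl⟩
      · exfalso
        have hv : permOf n S (2*j+1) < permOf n S (2*j+1+1) := by
          rw [val_valley hj, show 2*j+1+1 = 2*j+2 by ring, val_peak hj]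
          exact (c_lt_s hS hc hj).2
        exact absurd hpk.2 (by omega)
      · exfalso
        have hv : permOf n S i < permOf n S (i+1) := by
          rw [val_tail h, val_tail (show 2*S.card+1 ≤ i+1 by omega)]
          apply enumF_strictMono (show i - 1 - S.card < i + 1 - 1 - S.card by omega)
          omega
        exact absurd hpk.2 (by omega)
    · rintro ⟨j, hj, rfl⟩
      have e1 : 2*j+2-1 = 2*j+1 := by omega
      refine ⟨⟨by omega, by omega⟩, ?_, ?_⟩
      · rw [e1, val_valley hj, val_peak hj]
        exact (c_lt_s hS hc hj).2
      · rw [show 2*j+2+1 = 2*j+3 by ring, val_after_peak hj, val_peak hj]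
        exact (c_lt_s hS hc hj).1
  rw [CP, hpeaks, Finset.image_image]
  have : ∀ j ∈ Finset.range S.card, (permOf n S ∘ fun j => 2*j+2) j = enumF S j := by
    intro j hj
    simp only [Function.comp]
    exact val_peak (Finset.mem_range.1 hj)
  rw [Finset.image_congr (fun j hj => this j hj)]
  exact enumF_image

end suff

open scoped Classical in
noncomputable def Fcnt (n k : ℕ) : ℕ :=
  (((Finset.Icc 1 n).powerset.filter PCond).filter (fun S => S.card = k)).card

open scoped Classical

lemma Fcnt_mem {n k : ℕ} {S : Finset ℕ} :
    S ∈ ((Finset.Icc 1 n).powerset.filter PCond).filter (fun S => S.card = k) ↔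
      S ⊆ Finset.Icc 1 n ∧ PCond S ∧ S.card = k := by
  simp only [Finset.mem_filter, Finset.mem_powerset]
  tauto

lemma Fcnt_zero {n : ℕ} : Fcnt n 0 = 1 := by
  unfold Fcnt
  convert Finset.card_singleton (∅ : Finset ℕ) using 2
  ext S
  rw [Fcnt_mem, Finset.mem_singleton]
  constructor
  · rintro ⟨-, -, h⟩
    exact Finset.card_eq_zero.1 h
  · rintro rfl
    exact ⟨Finset.empty_subset _, fun s hs => absurd hs (Finset.notMem_empty s), rfl⟩

lemma Fcnt_big {n k : ℕ} (hk : 1 ≤ k) (hnk : n < 2 * k + 1) : Fcnt n k = 0 := by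
  unfold Fcnt
  rw [Finset.card_eq_zero]
  rw [Finset.eq_empty_iff_forall_notMem]
  intro S hS
  rw [Fcnt_mem] at hS
  obtain ⟨hsub, hc, hcard⟩ := hS
  have hne : S.Nonempty := Finset.card_pos.1 (by omega)
  have hmax := S.max'_mem hne
  have h1 := hc _ hmax
  have h2 : S.filter (· ≤ S.max' hne) = S := Finset.filter_true_of_mem (fun x hx => S.le_max' x hx)
  rw [h2, hcard] at h1
  have h3 := (Finset.mem_Icc.1 (hsub hmax)).2
  omega

lemma Fcnt_rec {n k : ℕ} (hk : 1 ≤ k) (hnk : 2 * k + 1 ≤ n) :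
    Fcnt n k = Fcnt (n-1) k + Fcnt (n-1) (k-1) := by
  classical
  set X := ((Finset.Icc 1 n).powerset.filter PCond).filter (fun S => S.card = k) with hX
  have hsplit := Finset.card_filter_add_card_filter_not (s := X) (p := fun S => n ∈ S)
  have hA : (X.filter (fun S => ¬ n ∈ S)).card = Fcnt (n-1) k := by
    unfold Fcnt
    congr 1
    ext S
    rw [Finset.mem_filter, Fcnt_mem, Fcnt_mem]
    constructor
    · rintro ⟨⟨h1, h2, h3⟩, h4⟩
      refine ⟨fun x hx => ?_, h2, h3⟩
      have := Finset.mem_Icc.1 (h1 hx)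
      have hxn : x ≠ n := fun h => h4 (h ▸ hx)
      exact Finset.mem_Icc.2 ⟨this.1, by omega⟩
    · rintro ⟨h1, h2, h3⟩
      have hnS : n ∉ S := fun h => by
        have := (Finset.mem_Icc.1 (h1 h)).2
        omega
      refine ⟨⟨fun x hx => ?_, h2, h3⟩, hnS⟩
      have := Finset.mem_Icc.1 (h1 hx)
      exact Finset.mem_Icc.2 ⟨this.1, by omega⟩
  have hB : (X.filter (fun S => n ∈ S)).card = Fcnt (n-1) (k-1) := by
    unfold Fcnt
    refine Finset.card_bij' (fun S _ => S.erase n) (fun T _ => insert n T) ?hi ?hj ?li ?ri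
    case li =>
      intro S hS
      rw [Finset.mem_filter] at hS
      exact Finset.insert_erase hS.2
    case ri =>
      intro T hT
      rw [Fcnt_mem] at hT
      have hnT : n ∉ T := fun h => by
        have := (Finset.mem_Icc.1 (hT.1 h)).2
        omega
      exact Finset.erase_insert hnT
    · -- maps to
      intro S hS
      rw [Finset.mem_filter, Fcnt_mem] at hS
      obtain ⟨⟨h1, h2, h3⟩, h4⟩ := hS
      rw [Fcnt_mem]
      refine ⟨fun x hx => ?_, ?_, ?_⟩
      · obtain ⟨hxn, hxS⟩ := Finset.mem_erase.1 hx
        have := Finset.mem_Icc.1 (h1 hxS)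
        exact Finset.mem_Icc.2 ⟨this.1, by omega⟩
      · intro s hs
        obtain ⟨hsn, hsS⟩ := Finset.mem_erase.1 hs
        have hsle := (Finset.mem_Icc.1 (h1 hsS)).2
        have hslt : s < n := by omega
        have hfeq : (S.erase n).filter (· ≤ s) = S.filter (· ≤ s) := by
          ext x
          simp only [Finset.mem_filter, Finset.mem_erase]
          constructor
          · rintro ⟨⟨-, hx⟩, hx2⟩; exact ⟨hx, hx2⟩
          · rintro ⟨hx, hx2⟩; exact ⟨⟨by omega, hx⟩, hx2⟩
        rw [hfeq]
        exact h2 s hsS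
      · rw [Finset.card_erase_of_mem h4, h3]
    · intro T hT
      rw [Fcnt_mem] at hT
      obtain ⟨h1, h2, h3⟩ := hT
      have hnT : n ∉ T := fun h => by
        have := (Finset.mem_Icc.1 (h1 h)).2
        omega
      rw [Finset.mem_filter, Fcnt_mem]
      refine ⟨⟨?_, ?_, ?_⟩, Finset.mem_insert_self n T⟩
      · intro x hx
        rcases Finset.mem_insert.1 hx with rfl | hx
        · exact Finset.mem_Icc.2 ⟨by omega, le_refl _⟩
        · have := Finset.mem_Icc.1 (h1 hx)
          exact Finset.mem_Icc.2 ⟨this.1, by omega⟩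
      · intro s hs
        rcases Finset.mem_insert.1 hs with rfl | hsT
        · have hfeq : (insert s T).filter (· ≤ s) = insert s T := by
            apply Finset.filter_true_of_mem
            intro x hx
            rcases Finset.mem_insert.1 hx with rfl | hx
            · exact le_refl _
            · have := (Finset.mem_Icc.1 (h1 hx)).2
              omega
          rw [hfeq, Finset.card_insert_of_notMem hnT, h3]
          omega
        · have hslt : s < n := by
            have := (Finset.mem_Icc.1 (h1 hsT)).2
            omega
          have hfeq : (insert n T).filter (· ≤ s) = T.filter (· ≤ s) := by
            ext x
            simp only [Finset.mem_filter, Finset.mem_insert]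
            constructor
            · rintro ⟨rfl | hx, hx2⟩
              · omega
              · exact ⟨hx, hx2⟩
            · rintro ⟨hx, hx2⟩; exact ⟨Or.inr hx, hx2⟩
          rw [hfeq]
          exact h2 s hsT
      · rw [Finset.card_insert_of_notMem hnT, h3]
        omega
  have hXc : Fcnt n k = X.card := rfl
  rw [hXc, ← hsplit, hA, hB]
  omega

lemma Fcnt_formula : ∀ n, ∀ k, 1 ≤ k → 2 * k + 1 ≤ n →
    (Fcnt n k : ℤ) = (n-1).choose k - (n-1).choose (k-1) := by
  intro n
  induction n using Nat.strong_induction_on with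
  | _ n IH =>
    intro k hk hnk
    have hn3 : 3 ≤ n := by omega
    rw [Fcnt_rec hk hnk]
    have hA : (Fcnt (n-1) k : ℤ) = (n-2).choose k - (n-2).choose (k-1) := by
      rcases Nat.lt_or_ge (2*k+1) n with h | h
      · rw [IH (n-1) (by omega) k hk (by omega)]
        congr 2 <;> omega
      · have hn : n = 2*k+1 := by omega
        rw [Fcnt_big hk (by omega)]
        have he : n - 2 = 2*k - 1 := by omega
        rw [he]
        have hsymm : (2*k-1).choose (k-1) = (2*k-1).choose k := by
          have h1 : k ≤ 2*k-1 := by omega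
          have h2 := Nat.choose_symm h1
          have h3 : 2*k-1-k = k-1 := by omega
          rw [h3] at h2
          rw [h2]
        rw [hsymm]
        simp
    have hpascal1 : ((n-1).choose k : ℤ) = (n-2).choose k + (n-2).choose (k-1) := by
      have h1 : n - 1 = (n-2) + 1 := by omega
      obtain ⟨k', rfl⟩ : ∃ k', k = k' + 1 := ⟨k-1, by omega⟩
      rw [h1, Nat.choose_succ_succ]
      push_cast
      simp [Nat.add_sub_cancel]
      ring
    push_cast
    rw [hA]
    rcases Nat.eq_or_lt_of_le hk with h1 | h1
    · obtain rfl : k = 1 := h1.symm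
      rw [show (1:ℕ)-1 = 0 from rfl, Fcnt_zero]
      simp only [Nat.choose_zero_right, Nat.choose_one_right] at *
      push_cast at hpascal1 ⊢
      omega
    · have hk2 : 2 ≤ k := h1
      have hB := IH (n-1) (by omega) (k-1) (by omega) (by omega)
      have e1 : n - 1 - 1 = n - 2 := by omega
      have e2 : k - 1 - 1 = k - 2 := by omega
      rw [e1, e2] at hB
      rw [hB]
      have hpascal2 : ((n-1).choose (k-1) : ℤ) = (n-2).choose (k-1) + (n-2).choose (k-2) := by
        have h1 : n - 1 = (n-2) + 1 := by omega
        obtain ⟨k', hk'⟩ : ∃ k', k - 1 = k' + 1 := ⟨k-2, by omega⟩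
        rw [h1, hk', Nat.choose_succ_succ]
        have h5 : k - 2 = k' := by omega
        rw [h5]
        push_cast
        ring
      omega

lemma exists_perm {n : ℕ} {S : Finset ℕ} (hS : S ⊆ Finset.Icc 1 n) (hc : PCond S)
    (hn : 3 ≤ n) : ∃ σ, IsPermOn n σ ∧ CP n σ = S :=
  ⟨permOf n S, permOf_isPermOn hS hc hn, permOf_CP hS hc hn⟩

lemma Pn_eq {n : ℕ} (hn : 3 ≤ n) : Pn n = (Finset.Icc 1 n).powerset.filter PCond := by
  unfold Pn
  ext S
  simp only [Finset.mem_filter, Finset.mem_powerset]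
  constructor
  · rintro ⟨h1, σ, hσ, rfl⟩
    exact ⟨h1, pcond_of_CP hn hσ⟩
  · rintro ⟨h1, h2⟩
    exact ⟨h1, exists_perm h1 h2 hn⟩

lemma pcount_eq {n k : ℕ} (hn : 3 ≤ n) : pcount n k = Fcnt n k := by
  unfold pcount Fcnt
  rw [Pn_eq hn]

lemma pcount_zero {n : ℕ} (hn : 3 ≤ n) : pcount n 0 = 1 := by
  rw [pcount_eq hn, Fcnt_zero]

lemma pcount_val {n k : ℕ} (hn : 3 ≤ n) (hk : 1 ≤ k) (h2k : 2 * k + 1 ≤ n) :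
    (pcount n k : ℚ) = (n-1).choose k - (n-1).choose (k-1) := by
  rw [pcount_eq hn]
  exact_mod_cast congrArg (fun z : ℤ => (z : ℚ)) (Fcnt_formula n k hk h2k)

lemma neg_one_zpow (i : ℕ) : (-1:ℚ)^((i:ℤ)-1) = -(-1:ℚ)^i := by
  rw [zpow_sub₀ (by norm_num : (-1:ℚ) ≠ 0), zpow_natCast, zpow_one]
  ring

lemma sum_part {n : ℕ} (hn : 3 ≤ n) :
    ∀ j, 1 ≤ j → 2 * j + 1 ≤ n →
    ∑ i ∈ Finset.range (j+1), (-1:ℚ)^((i:ℤ)-1) * (pcount n i : ℚ)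
      = (-1:ℚ)^j * ((n-2).choose (j-1) - (n-2).choose j) := by
  intro j
  induction j with
  | zero => omega
  | succ r IHr =>
    intro _ h2j
    rcases Nat.eq_or_lt_of_le (show 1 ≤ r + 1 by omega) with h1 | h1
    · -- r = 0, base case j = 1
      obtain rfl : r = 0 := by omega
      rw [Finset.sum_range_succ, Finset.sum_range_one]
      rw [neg_one_zpow 0, neg_one_zpow 1, pcount_zero hn, pcount_val hn (le_refl 1) (by omega)]
      have hp : ((n-1).choose 1 : ℚ) = (n-2).choose 0 + (n-2).choose 1 := by
        obtain ⟨N, rfl⟩ : ∃ N, n = N + 3 := ⟨n - 3, by omega⟩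
        show ((N+2).choose 1 : ℚ) = ((N+1).choose 0 : ℚ) + ((N+1).choose 1 : ℚ)
        exact_mod_cast Nat.choose_succ_succ (N+1) 0
      rw [show (1:ℕ) - 1 = 0 by rfl]
      have hz1 : ((n-2).choose 0 : ℚ) = 1 := by norm_num
      have hz2 : ((n-1).choose 0 : ℚ) = 1 := by norm_num
      push_cast
      rw [hz1] at hp
      nlinarith [hp, hz2]
    · -- r ≥ 1
      have hr1 : 1 ≤ r := by omega
      rw [Finset.sum_range_succ, IHr hr1 (by omega)]
      rw [neg_one_zpow (r+1), pcount_val hn (by omega) h2j]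
      obtain ⟨s, rfl⟩ : ∃ s, r = s + 1 := ⟨r - 1, by omega⟩
      obtain ⟨N, rfl⟩ : ∃ N, n = N + 3 := ⟨n - 3, by omega⟩
      show (-1:ℚ)^(s+1) * (((N+1).choose (s+1-1) : ℚ) - ((N+1).choose (s+1) : ℚ))
          + -(-1:ℚ)^(s+1+1) * (((N+2).choose (s+1+1) : ℚ) - ((N+2).choose (s+1+1-1) : ℚ))
          = (-1:ℚ)^(s+1+1) * (((N+1).choose (s+1+1-1) : ℚ) - ((N+1).choose (s+1+1) : ℚ))
      have e1 : s + 1 - 1 = s := by omega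
      have e2 : s + 1 + 1 - 1 = s + 1 := by omega
      rw [e1, e2]
      have hp1 : ((N+2).choose (s+2) : ℚ) = (N+1).choose (s+1) + (N+1).choose (s+2) := by
        exact_mod_cast Nat.choose_succ_succ (N+1) (s+1)
      have hp2 : ((N+2).choose (s+1) : ℚ) = (N+1).choose s + (N+1).choose (s+1) := by
        exact_mod_cast Nat.choose_succ_succ (N+1) s
      rw [show s+1+1 = s+2 by ring] at *
      rw [hp1, hp2]
      ring

/-- Corollary 3.4: the reduced Euler characteristic
`χ̃(P_n) = Σ_{i=0}^{⌊(n−1)/2⌋} (−1)^{i−1} p_{n,i−1}` vanishes for odd `n` and equals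
`(2·(−1)^{n/2}/n)·C(n−2, (n−2)/2)` for even `n`. -/
theorem Pn_reduced_euler_char (n : ℕ) (hn : 3 ≤ n) :
    (Odd n →
      ∑ i ∈ Finset.range ((n - 1) / 2 + 1),
        (-1 : ℚ) ^ ((i : ℤ) - 1) * (pcount n i : ℚ) = 0) ∧
    (Even n →
      ∑ i ∈ Finset.range ((n - 1) / 2 + 1),
        (-1 : ℚ) ^ ((i : ℤ) - 1) * (pcount n i : ℚ) =
        2 * (-1 : ℚ) ^ (n / 2) / (n : ℚ) * (Nat.choose (n - 2) ((n - 2) / 2) : ℚ)) := by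
  have hm1 : 1 ≤ (n-1)/2 := by omega
  have hsum := sum_part hn ((n-1)/2) hm1 (by omega)
  constructor
  · intro hodd
    obtain ⟨t, rfl⟩ := hodd
    have ht1 : 1 ≤ t := by omega
    have hm : (2*t+1-1)/2 = t := by omega
    rw [hm] at hsum
    rw [hm, hsum]
    have e1 : 2*t+1-2 = 2*t-1 := by omega
    rw [e1]
    have hsymm : (2*t-1).choose (t-1) = (2*t-1).choose t := by
      have h1 : t ≤ 2*t-1 := by omega
      have h2 := Nat.choose_symm h1
      have h3 : 2*t-1-t = t-1 := by omega
      rw [h3] at h2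
      rw [h2]
    rw [hsymm]
    ring
  · intro heven
    obtain ⟨t, rfl⟩ := heven
    obtain ⟨u, rfl⟩ : ∃ u, t = u + 2 := ⟨t - 2, by omega⟩
    have hm : ((u+2)+(u+2)-1)/2 = u+1 := by omega
    rw [hm] at hsum
    rw [hm, hsum]
    have e1 : (u+2)+(u+2)-2 = 2*u+2 := by omega
    have e2 : (2*u+2)/2 = u+1 := by omega
    have e3 : ((u+2)+(u+2))/2 = u+2 := by omega
    have e4 : u+1-1 = u := by omega
    rw [e1, e2, e3, e4]
    -- key choose identity
    have hq : ((2*u+2).choose (u+1) : ℚ) * (u+1) = ((2*u+2).choose u : ℚ) * (u+2) := by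
      have h := Nat.choose_succ_right_eq (2*u+2) u
      have h2 : 2*u+2-u = u+2 := by omega
      rw [h2] at h
      exact_mod_cast congrArg (fun z : ℕ => (z : ℚ)) h
    have hne : ((u:ℚ)+2+(u+2)) ≠ 0 := by positivity
    have hcast : (((u+2)+(u+2) : ℕ) : ℚ) = (u:ℚ)+2+(u+2) := by push_cast; ring
    rw [hcast]
    field_simp
    linear_combination (2*(-1:ℚ)^u) * hq
end

section
/- Let n ≥ 3 and define h_{n,i} by the polynomial identity P_n(x−1) = Σ_{i=0}^{⌊(n−1)/2⌋} h_{n,i} x^{⌊(n−1)/2⌋ − i}, where P_n(x) is the f-polynomial of P_n. Set ε(n) = 1 if n is odd and ε(n) = 0 if n is even, and let c_m = C(2m, m)/(m+1) denote the m-th Catalan number. Then h_{n+1,0} = h_{n,0}; h_{n+1,i} = h_{n,i} + ε(n)·h_{n+1,i−1} for 1 ≤ i ≤ ⌊n/2⌋ − 1; and h_{n+1,⌊n/2⌋} = ε(n)·c_{⌊n/2⌋}; with initial conditions h_{3,0} = 1 and h_{3,1} = 0. -/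
/-
A set `S ⊆ [n]` is a circular peak set iff its `j`-th smallest element exceeds `2 j`. Indeed, the
peaks with value `≤ s` sit at pairwise non-adjacent positions, so together with their right
neighbours and the left neighbour of the first of them they occupy `2 j + 1` of the `s` positions
carrying a value `≤ s`; conversely, interleaving `[n] \ S` with `S` realises `S`. Splitting by
whether `n + 1 ∈ S` gives `p_{n+1,k} = p_{n,k} + p_{n,k-1}` for `2 k ≤ n`, hence the ballot numbers
`p_{n,k} = C(n-1,k) - C(n-1,k-1)` and `p_{2m+1,m} = c_m`. In polynomial form this reads
`P_{n+1} = (x + 1) P_n` for even `n` and `x P_{n+1} = (x + 1) P_n - c_{(n-1)/2}` for odd `n`;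
substituting `x - 1` and comparing coefficients gives the recurrence.
-/

open Finset Polynomial

namespace Finset

variable {S : Finset ℕ} {j : ℕ}

lemma finite_ofPred_mem (S : Finset ℕ) : (Set.ofPred (· ∈ S)).Finite := S.finite_toSet

lemma card_finite_ofPred_mem_toFinset : #(finite_ofPred_mem S).toFinset = #S :=
  congrArg card (finite_toSet_toFinset S)

lemma nth_mem_of_lt_card (hj : j < #S) : Nat.nth (· ∈ S) j ∈ S :=
  Nat.nth_mem_of_lt_card (finite_ofPred_mem S) (by rwa [card_finite_ofPred_mem_toFinset])

lemma count_nth_of_lt_card (hj : j < #S) : Nat.count (· ∈ S) (Nat.nth (· ∈ S) j) = j :=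
  Nat.count_nth_of_lt_card_finite (finite_ofPred_mem S) (by rwa [card_finite_ofPred_mem_toFinset])

lemma nth_injOn : Set.InjOn (Nat.nth (· ∈ S)) (Set.Iio #S) :=
  card_finite_ofPred_mem_toFinset (S := S) ▸ Nat.nth_injOn (finite_ofPred_mem S)

lemma infinite_ofPred_notMem (S : Finset ℕ) : (Set.ofPred (· ∉ S)).Infinite :=
  S.finite_toSet.infinite_compl

lemma exists_lt_card_nth_eq {x : ℕ} (hx : x ∈ S) : ∃ j < #S, Nat.nth (· ∈ S) j = x :=
  card_finite_ofPred_mem_toFinset (S := S) ▸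
    Nat.exists_lt_card_finite_nth_eq (finite_ofPred_mem S) hx

end Finset

def PeakAdmissible (S : Finset ℕ) : Prop :=
  ∀ s ∈ S, 2 * #{t ∈ S | t ≤ s} < s

lemma two_mul_card_lt_card_of_neighbours_mem {P T : Finset ℕ} (hP : P.Nonempty) (h0 : 0 ∉ P)
    (hsep : ∀ p ∈ P, p + 1 ∉ P) (hT : ∀ p ∈ P, p - 1 ∈ T ∧ p ∈ T ∧ p + 1 ∈ T) :
    2 * #P < #T := by
  set p₀ := P.min' hP
  have hp₀ : p₀ ∈ P := P.min'_mem hP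
  have hp₀_pos : p₀ ≠ 0 := fun h => h0 (h ▸ hp₀)
  have hdisj : Disjoint P (P.image (· + 1)) := by
    rw [disjoint_right]
    rintro _ hq hqP
    obtain ⟨p, hp, rfl⟩ := mem_image.1 hq
    exact hsep p hp hqP
  have hnew : p₀ - 1 ∉ P ∪ P.image (· + 1) := by
    rw [mem_union, mem_image]
    rintro (h | ⟨p, hp, hpeq⟩)
    · exact absurd (P.min'_le _ h) (by omega)
    · exact absurd (P.min'_le p hp) (by omega)
  have hsub : insert (p₀ - 1) (P ∪ P.image (· + 1)) ⊆ T := by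
    refine insert_subset (hT p₀ hp₀).1 (union_subset (fun p hp => (hT p hp).2.1) ?_)
    intro q hq
    obtain ⟨p, hp, rfl⟩ := mem_image.1 hq
    exact (hT p hp).2.2
  have := card_le_card hsub
  rw [card_insert_of_notMem hnew, card_union_of_disjoint hdisj,
    card_image_of_injective _ (add_left_injective 1)] at this
  omega

lemma IsPermOn.card_filter_apply_le {n s : ℕ} {σ : ℕ → ℕ} (hσ : IsPermOn n σ) (hs : s ≤ n) :
    #{i ∈ Icc 1 n | σ i ≤ s} = s := by
  have : #{i ∈ Icc 1 n | σ i ≤ s} = #(Icc 1 s) := by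
    refine card_nbij σ (fun i hi => ?_) (hσ.injOn.mono fun i hi => ?_) (fun v hv => ?_)
    · simp only [coe_filter, mem_Icc, Set.mem_ofPred_eq] at hi
      have := hσ.mapsTo (Set.mem_Icc.2 hi.1)
      simp only [coe_Icc, Set.mem_Icc] at this ⊢
      omega
    · simp only [coe_filter, mem_Icc, Set.mem_ofPred_eq] at hi
      exact Set.mem_Icc.2 hi.1
    · simp only [coe_Icc, Set.mem_Icc] at hv
      obtain ⟨i, hi, rfl⟩ := hσ.surjOn (Set.mem_Icc.2 ⟨hv.1, hv.2.trans hs⟩)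
      exact ⟨i, by simpa [Set.mem_Icc] using ⟨hi, hv.2⟩, rfl⟩
  rw [this, Nat.card_Icc, Nat.add_sub_cancel]

lemma peakAdmissible_CP {n : ℕ} {σ : ℕ → ℕ} (hσ : IsPermOn n σ) : PeakAdmissible (CP n σ) := by
  intro s hs
  obtain ⟨i₀, hi₀, rfl⟩ := mem_image.1 hs
  set P := {i ∈ Icc 2 (n - 1) | (σ (i - 1) < σ i ∧ σ (i + 1) < σ i) ∧ σ i ≤ σ i₀}
  have hPmem : ∀ i ∈ P, (2 ≤ i ∧ i ≤ n - 1) ∧ (σ (i - 1) < σ i ∧ σ (i + 1) < σ i) ∧ σ i ≤ σ i₀ :=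
    fun i hi => by simpa only [P, mem_filter, mem_Icc, and_assoc] using hi
  have hi₀P : i₀ ∈ P := by
    simp only [mem_filter, mem_Icc] at hi₀
    exact mem_filter.2 ⟨mem_Icc.2 hi₀.1, hi₀.2, le_rfl⟩
  have hcard : #{t ∈ CP n σ | t ≤ σ i₀} = #P := by
    rw [CP, filter_image, filter_filter]
    refine card_image_of_injOn (hσ.injOn.mono fun i hi => ?_)
    have := hPmem i hi
    exact Set.mem_Icc.2 ⟨by omega, by omega⟩
  have hs_le : σ i₀ ≤ n := by
    have := (hPmem i₀ hi₀P).1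
    exact (Set.mem_Icc.1 (hσ.mapsTo (Set.mem_Icc.2 ⟨by omega, by omega⟩))).2
  rw [hcard, ← hσ.card_filter_apply_le hs_le]
  refine two_mul_card_lt_card_of_neighbours_mem ⟨i₀, hi₀P⟩ (fun h => by have := hPmem 0 h; omega)
    (fun i hi hi' => ?_) (fun i hi => ?_)
  · have := hPmem i hi
    have := hPmem (i + 1) hi'
    rw [Nat.add_sub_cancel] at this
    omega
  · obtain ⟨hi, hpk, hle⟩ := hPmem i hi
    simp only [mem_filter, mem_Icc]
    omega

section PeakPerm

variable {n : ℕ} {S : Finset ℕ}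

lemma PeakAdmissible.two_mul_lt_nth (hS : PeakAdmissible S) {j : ℕ} (hj : j < #S) :
    2 * (j + 1) < Nat.nth (· ∈ S) j := by
  set s := Nat.nth (· ∈ S) j
  have hs : s ∈ S := nth_mem_of_lt_card hj
  have hrank : #{t ∈ S | t ≤ s} = j + 1 := by
    have : {t ∈ S | t ≤ s} = {t ∈ range (s + 1) | t ∈ S} := by
      ext t; simp only [mem_filter, mem_range, Nat.lt_succ_iff, and_comm]
    rw [this, ← Nat.count_eq_card_filter_range, Nat.count_succ, if_pos hs,
      count_nth_of_lt_card hj]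
  simpa [hrank] using hS s hs

lemma PeakAdmissible.two_mul_card_le (hSn : S ⊆ Icc 1 n) (hS : PeakAdmissible S) :
    2 * #S ≤ n := by
  rcases Nat.eq_zero_or_pos #S with h | h
  · omega
  · have hlast := hS.two_mul_lt_nth (j := #S - 1) (by omega)
    have := (mem_Icc.1 (hSn (nth_mem_of_lt_card (S := S) (j := #S - 1) (by omega)))).2
    omega

lemma le_count_notMem_add_count (S : Finset ℕ) (m : ℕ) :
    m ≤ Nat.count (· ∉ insert 0 S) m + Nat.count (· ∈ S) m + 1 := by
  induction m with
  | zero => simp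
  | succ m ih =>
    simp only [Nat.count_succ, mem_insert]
    by_cases hm : m = 0
    · split_ifs <;> omega
    · split_ifs <;> simp_all <;> omega

/-- The positive non-members `w₀ < w₁ < ⋯` of `S` are interleaved with the members
`s₀ < s₁ < ⋯` as `w₀ s₀ w₁ s₁ ⋯ w_{k-1} s_{k-1} w_k w_{k+1} ⋯`, where `k = #S`; the peaks are
at the positions `2, 4, …, 2k`. -/
noncomputable def peakPerm (S : Finset ℕ) (i : ℕ) : ℕ :=
  if i % 2 = 0 ∧ i ≤ 2 * #S then Nat.nth (· ∈ S) (i / 2 - 1)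
  else Nat.nth (· ∉ insert 0 S) (i - 1 - min #S (i / 2))

lemma nth_notMem_strictMono : StrictMono (Nat.nth (· ∉ insert 0 S)) :=
  Nat.nth_strictMono (insert 0 S).infinite_ofPred_notMem

lemma peakPerm_two_mul_add_two {j : ℕ} (hj : j < #S) :
    peakPerm S (2 * j + 2) = Nat.nth (· ∈ S) j := by
  rw [peakPerm, if_pos (by omega)]
  congr 1
  omega

lemma peakPerm_eq_nth_notMem {i : ℕ} (hi : ¬(i % 2 = 0 ∧ i ≤ 2 * #S)) :
    peakPerm S i = Nat.nth (· ∉ insert 0 S) (i - 1 - min #S (i / 2)) :=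
  if_neg hi

lemma nth_notMem_lt_nth_mem (hS : PeakAdmissible S) {j : ℕ} (hj : j < #S) :
    Nat.nth (· ∉ insert 0 S) (j + 1) < Nat.nth (· ∈ S) j := by
  apply Nat.nth_lt_of_lt_count
  have := le_count_notMem_add_count S (Nat.nth (· ∈ S) j)
  rw [count_nth_of_lt_card hj] at this
  have := hS.two_mul_lt_nth hj
  omega

lemma nth_notMem_mem_Icc {j : ℕ} (hj : j < n - #S) :
    Nat.nth (· ∉ insert 0 S) j ∈ Icc 1 n := by
  have hw := Nat.nth_mem_of_infinite (insert 0 S).infinite_ofPred_notMem j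
  have hne : Nat.nth (· ∉ insert 0 S) j ≠ 0 := fun h => hw (by rw [h]; exact mem_insert_self 0 S)
  have hcount := le_count_notMem_add_count S (n + 1)
  have hcard := card_finite_ofPred_mem_toFinset (S := S) ▸
    Nat.count_le_card (finite_ofPred_mem S) (n + 1)
  have := Nat.nth_lt_of_lt_count (p := (· ∉ insert 0 S)) (n := n + 1) (k := j) (by omega)
  exact mem_Icc.2 ⟨by omega, by omega⟩

lemma isPermOn_peakPerm (hSn : S ⊆ Icc 1 n) (hS : PeakAdmissible S) :
    IsPermOn n (peakPerm S) := by
  have hcard := hS.two_mul_card_le hSn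
  have hmem : ∀ {i}, 1 ≤ i → i % 2 = 0 ∧ i ≤ 2 * #S → peakPerm S i ∈ S := fun hi hpk => by
    rw [peakPerm, if_pos hpk]
    exact nth_mem_of_lt_card (by omega)
  have hnotMem : ∀ {i}, ¬(i % 2 = 0 ∧ i ≤ 2 * #S) → peakPerm S i ∉ S := fun hpk h => by
    rw [peakPerm_eq_nth_notMem hpk] at h
    exact Nat.nth_mem_of_infinite (insert 0 S).infinite_ofPred_notMem _ (mem_insert_of_mem h)
  have hmaps : Set.MapsTo (peakPerm S) (Set.Icc 1 n) (Set.Icc 1 n) := by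
    intro i hi
    rw [Set.mem_Icc] at hi
    rw [← coe_Icc, mem_coe]
    by_cases hpk : i % 2 = 0 ∧ i ≤ 2 * #S
    · exact hSn (hmem hi.1 hpk)
    · rw [peakPerm_eq_nth_notMem hpk]
      exact nth_notMem_mem_Icc (by omega)
  have hinj : Set.InjOn (peakPerm S) (Set.Icc 1 n) := by
    intro i₁ hi₁ i₂ hi₂ he
    rw [Set.mem_Icc] at hi₁ hi₂
    by_cases hpk₁ : i₁ % 2 = 0 ∧ i₁ ≤ 2 * #S <;> by_cases hpk₂ : i₂ % 2 = 0 ∧ i₂ ≤ 2 * #S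
    · rw [peakPerm, if_pos hpk₁, peakPerm, if_pos hpk₂] at he
      have := nth_injOn (Set.mem_Iio.2 (by omega)) (Set.mem_Iio.2 (by omega)) he
      omega
    · exact absurd (he ▸ hmem hi₁.1 hpk₁) (hnotMem hpk₂)
    · exact absurd (he ▸ hnotMem hpk₁) (not_not.2 (hmem hi₂.1 hpk₂))
    · rw [peakPerm_eq_nth_notMem hpk₁, peakPerm_eq_nth_notMem hpk₂] at he
      have := nth_notMem_strictMono.injective he
      omega
  exact ((Set.finite_Icc 1 n).injOn_iff_bijOn_of_mapsTo hmaps).1 hinj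

lemma peakPerm_lt_succ (hS : PeakAdmissible S) {i : ℕ} (hi : 1 ≤ i)
    (hpk : ¬(i % 2 = 0 ∧ i ≤ 2 * #S)) : peakPerm S i < peakPerm S (i + 1) := by
  rw [peakPerm_eq_nth_notMem hpk]
  by_cases hpk' : (i + 1) % 2 = 0 ∧ i + 1 ≤ 2 * #S
  · obtain ⟨j, rfl⟩ : ∃ j, i = 2 * j + 1 := ⟨i / 2, by omega⟩
    rw [peakPerm_two_mul_add_two (by omega)]
    calc Nat.nth (· ∉ insert 0 S) (2 * j + 1 - 1 - min #S ((2 * j + 1) / 2))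
        < Nat.nth (· ∉ insert 0 S) (j + 1) := nth_notMem_strictMono (by omega)
      _ < Nat.nth (· ∈ S) j := nth_notMem_lt_nth_mem hS (by omega)
  · rw [peakPerm_eq_nth_notMem hpk']
    exact nth_notMem_strictMono (by omega)

lemma peakPerm_isPeak (hS : PeakAdmissible S) {j : ℕ} (hj : j < #S) :
    peakPerm S (2 * j + 2 - 1) < peakPerm S (2 * j + 2) ∧
      peakPerm S (2 * j + 2 + 1) < peakPerm S (2 * j + 2) := by
  rw [peakPerm_two_mul_add_two hj, peakPerm_eq_nth_notMem (by omega),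
    peakPerm_eq_nth_notMem (by omega)]
  have hlt := nth_notMem_lt_nth_mem hS hj
  constructor
  · calc _ < Nat.nth (· ∉ insert 0 S) (j + 1) := nth_notMem_strictMono (by omega)
      _ < _ := hlt
  · convert hlt using 2
    omega

lemma CP_peakPerm (hSn : S ⊆ Icc 1 n) (hS : PeakAdmissible S) : CP n (peakPerm S) = S := by
  ext x
  simp only [CP, mem_image, mem_filter, mem_Icc]
  constructor
  · rintro ⟨i, ⟨hi, hpeak⟩, rfl⟩
    by_cases hpk : i % 2 = 0 ∧ i ≤ 2 * #S
    · obtain ⟨j, rfl⟩ : ∃ j, i = 2 * j + 2 := ⟨i / 2 - 1, by omega⟩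
      rw [peakPerm_two_mul_add_two (by omega)]
      exact nth_mem_of_lt_card (by omega)
    · exact absurd hpeak.2 (peakPerm_lt_succ hS (by omega) hpk).not_gt
  · intro hx
    obtain ⟨j, hj, rfl⟩ := exists_lt_card_nth_eq hx
    have := hS.two_mul_lt_nth hj
    have := (mem_Icc.1 (hSn hx)).2
    exact ⟨2 * j + 2, ⟨by omega, peakPerm_isPeak hS hj⟩, peakPerm_two_mul_add_two hj⟩

end PeakPerm

lemma mem_Pn_iff {n : ℕ} {S : Finset ℕ} : S ∈ Pn n ↔ S ⊆ Icc 1 n ∧ PeakAdmissible S := by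
  classical
  rw [Pn, mem_filter, mem_powerset]
  constructor
  · rintro ⟨hSn, σ, hσ, rfl⟩
    exact ⟨hSn, peakAdmissible_CP hσ⟩
  · rintro ⟨hSn, hS⟩
    exact ⟨hSn, peakPerm S, isPermOn_peakPerm hSn hS, CP_peakPerm hSn hS⟩

instance : DecidablePred PeakAdmissible := fun S => by
  unfold PeakAdmissible; infer_instance

lemma pcount_eq_card (n k : ℕ) :
    pcount n k = #{S ∈ (Icc 1 n).powersetCard k | PeakAdmissible S} := by
  rw [pcount]
  congr 1
  ext S
  rw [mem_filter, mem_filter, mem_powersetCard, mem_Pn_iff]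
  tauto

lemma peakAdmissible_insert_iff {T : Finset ℕ} {a : ℕ} (ha : ∀ t ∈ T, t < a) :
    PeakAdmissible (insert a T) ↔ PeakAdmissible T ∧ 2 * (#T + 1) < a := by
  have haT : a ∉ T := fun h => (ha a h).false
  have hbelow : ∀ s ∈ T, {t ∈ insert a T | t ≤ s} = {t ∈ T | t ≤ s} := fun s hs => by
    rw [filter_insert, if_neg (ha s hs).not_ge]
  have htop : {t ∈ insert a T | t ≤ a} = insert a T := by
    refine filter_true_of_mem fun t ht => ?_
    rcases mem_insert.1 ht with rfl | ht
    exacts [le_rfl, (ha t ht).le]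
  simp only [PeakAdmissible, forall_mem_insert, htop, card_insert_of_notMem haT]
  constructor
  · rintro ⟨htop, hT⟩
    exact ⟨fun s hs => hbelow s hs ▸ hT s hs, htop⟩
  · rintro ⟨hT, htop⟩
    exact ⟨htop, fun s hs => (hbelow s hs).symm ▸ hT s hs⟩

lemma pcount_zero_right (n : ℕ) : pcount n 0 = 1 := by
  have : PeakAdmissible ∅ := fun s hs => absurd hs (notMem_empty s)
  rw [pcount_eq_card, powersetCard_zero, filter_singleton, if_pos this, card_singleton]

lemma pcount_eq_zero {n k : ℕ} (hk : k ≠ 0) (hn : n ≤ 2 * k) : pcount n k = 0 := by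
  rw [pcount_eq_card, card_eq_zero, filter_eq_empty_iff]
  intro S hS hadm
  obtain ⟨hSn, rfl⟩ := mem_powersetCard.1 hS
  have hne : S.Nonempty := card_ne_zero.1 hk
  have hmax := hadm _ (S.max'_mem hne)
  rw [filter_true_of_mem fun t ht => S.le_max' t ht] at hmax
  have := (mem_Icc.1 (hSn (S.max'_mem hne))).2
  omega

lemma pcount_succ_succ {n k : ℕ} (hk : 2 * (k + 1) ≤ n) :
    pcount (n + 1) (k + 1) = pcount n (k + 1) + pcount n k := by
  have hIcc : Icc 1 (n + 1) = insert (n + 1) (Icc 1 n) := by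
    ext; simp only [mem_Icc, mem_insert]; omega
  have hnotMem : n + 1 ∉ Icc 1 n := by simp
  have hinsert : ∀ T ∈ (Icc 1 n).powersetCard k,
      PeakAdmissible (insert (n + 1) T) ↔ PeakAdmissible T := fun T hT => by
    obtain ⟨hTn, rfl⟩ := mem_powersetCard.1 hT
    rw [peakAdmissible_insert_iff fun t ht => by have := mem_Icc.1 (hTn ht); omega]
    exact and_iff_left (by omega)
  rw [pcount_eq_card, pcount_eq_card, pcount_eq_card, hIcc,
    powersetCard_succ_insert hnotMem, filter_union, filter_image,
    card_union_of_disjoint, card_image_of_injOn, filter_congr hinsert]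
  · intro T hT T' hT' h
    simp only [coe_filter, mem_powersetCard, Set.mem_ofPred_eq] at hT hT'
    rw [← erase_insert (fun h => hnotMem (hT.1.1 h)), h,
      erase_insert (fun h => hnotMem (hT'.1.1 h))]
  · rw [disjoint_left]
    intro S hS hS'
    obtain ⟨T, -, rfl⟩ := mem_image.1 hS'
    exact hnotMem ((mem_powersetCard.1 (mem_filter.1 hS).1).1 (mem_insert_self _ _))

lemma pcount_succ_add_choose {m k : ℕ} (hk : 2 * (k + 1) ≤ m + 1) :
    pcount (m + 1) (k + 1) + m.choose k = m.choose (k + 1) := by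
  induction m generalizing k with
  | zero => omega
  | succ m ih =>
    rw [Nat.choose_succ_succ' m k]
    by_cases hkm : 2 * (k + 1) ≤ m + 1
    · rw [pcount_succ_succ hkm]
      have ih₁ := ih hkm
      rcases k with _ | l
      · simp only [pcount_zero_right, Nat.choose_zero_right] at ih₁ ⊢
        omega
      · have ih₂ := ih (k := l) (by omega)
        rw [Nat.choose_succ_succ' m l]
        omega
    · obtain rfl : m = 2 * k := by omega
      rw [pcount_eq_zero (by omega) (by omega), zero_add,
        ← Nat.choose_succ_succ', Nat.choose_symm_half]

lemma pcount_two_mul_add_one (D : ℕ) : pcount (2 * D + 1) D = catalan D := by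
  rcases D with _ | d
  · rw [pcount_zero_right, catalan_zero]
  have hrec := pcount_succ_add_choose (m := 2 * d + 2) (k := d) (by omega)
  have hsymm := Nat.choose_succ_right_eq (2 * d + 2) d
  have hcat := succ_mul_catalan_eq_centralBinom (d + 1)
  rw [show 2 * d + 2 - d = d + 2 by omega] at hsymm
  rw [Nat.centralBinom_eq_two_mul_choose, show 2 * (d + 1) = 2 * d + 2 by ring] at hcat
  rw [show 2 * (d + 1) + 1 = 2 * d + 2 + 1 by ring]
  -- `(d + 2) p = (d + 2) C(2d+2, d+1) - (d + 1) C(2d+2, d+1) = C(2d+2, d+1) = (d + 2) c_{d+1}`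
  apply Nat.eq_of_mul_eq_mul_left (show 0 < d + 2 by omega)
  nlinarith

section DescPoly

variable {R : Type*} [CommSemiring R] {D : ℕ} {a b : ℕ → R}

noncomputable def descPoly (D : ℕ) (a : ℕ → R) : R[X] :=
  ∑ i ∈ range (D + 1), C (a i) * X ^ (D - i)

lemma descPoly_congr (h : ∀ i ≤ D, a i = b i) : descPoly D a = descPoly D b :=
  sum_congr rfl fun i hi => by rw [h i (by simpa [Nat.lt_succ_iff] using hi)]

lemma descPoly_add (D : ℕ) (a b : ℕ → R) :
    descPoly D (fun i => a i + b i) = descPoly D a + descPoly D b := by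
  simp only [descPoly, C_add, add_mul, sum_add_distrib]

lemma descPoly_succ (D : ℕ) (a : ℕ → R) :
    descPoly (D + 1) a = X * descPoly D a + C (a (D + 1)) := by
  rw [descPoly, sum_range_succ, Nat.sub_self, pow_zero, mul_one, descPoly, mul_sum]
  congr 1
  refine sum_congr rfl fun i hi => ?_
  rw [show D + 1 - i = D - i + 1 by simp at hi; omega, pow_succ]
  ring

lemma descPoly_succ' (D : ℕ) (a : ℕ → R) :
    descPoly (D + 1) a = descPoly D (fun i => a (i + 1)) + C (a 0) * X ^ (D + 1) := by
  rw [descPoly, sum_range_succ', descPoly]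
  congr 1
  refine sum_congr rfl fun i hi => ?_
  rw [show D + 1 - (i + 1) = D - i by omega]

lemma coeff_descPoly (D : ℕ) (a : ℕ → R) (m : ℕ) :
    (descPoly D a).coeff m = if m ≤ D then a (D - m) else 0 := by
  simp only [descPoly, finsetSum_coeff, coeff_C_mul_X_pow]
  split_ifs with hm
  · rw [sum_eq_single (D - m) (fun i hi hne => if_neg (by simp at hi; omega))
      (fun h => absurd (mem_range.2 (by omega)) h), if_pos (by omega)]
  · exact sum_eq_zero fun i hi => if_neg (by simp at hi; omega)

lemma coeff_descPoly_sub {i : ℕ} (hi : i ≤ D) : (descPoly D a).coeff (D - i) = a i := by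
  rw [coeff_descPoly, if_pos (Nat.sub_le D i), Nat.sub_sub_self hi]

lemma coeff_descPoly_of_lt {m : ℕ} (hm : D < m) : (descPoly D a).coeff m = 0 := by
  rw [coeff_descPoly, if_neg (by omega)]

lemma descPoly_succ_eq_X_add_one_mul (h0 : b 0 = a 0)
    (hb : ∀ k ≤ D, b (k + 1) = a (k + 1) + a k) (ha : a (D + 1) = 0) :
    descPoly (D + 1) b = (X + 1) * descPoly D a := by
  calc descPoly (D + 1) b
      = descPoly D (fun i => a (i + 1)) + descPoly D a + C (a 0) * X ^ (D + 1) := by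
        rw [descPoly_succ', descPoly_congr hb, descPoly_add, h0]
    _ = descPoly (D + 1) a + descPoly D a := by rw [descPoly_succ' D a]; ring
    _ = (X + 1) * descPoly D a := by rw [descPoly_succ, ha, C_0]; ring

lemma eq_of_descPoly_succ_eq_X_mul (h : descPoly (D + 1) b = X * descPoly D a) :
    (∀ i ≤ D, b i = a i) ∧ b (D + 1) = 0 := by
  refine ⟨fun i hi => ?_, ?_⟩
  · have := congrArg (coeff · (D - i + 1)) h
    simp only [coeff_X_mul, coeff_descPoly_sub hi] at this
    rwa [show D - i + 1 = D + 1 - i by omega, coeff_descPoly_sub (by omega)] at this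
  · have := congrArg (coeff · 0) h
    simp only [coeff_X_mul_zero] at this
    rwa [← Nat.sub_self (D + 1), coeff_descPoly_sub le_rfl] at this

end DescPoly

lemma eq_of_X_sub_one_mul_descPoly {R : Type*} [CommRing R] {D : ℕ} {a b : ℕ → R} {c : R}
    (h : (X - 1) * descPoly D b = X * descPoly D a - C c) :
    b 0 = a 0 ∧ (∀ i, 1 ≤ i → i ≤ D → b i = a i + b (i - 1)) ∧ b D = c := by
  have hsucc : ∀ i ≤ D, b i - (descPoly D b).coeff (D - i + 1) = a i := fun i hi => by
    have := congrArg (coeff · (D - i + 1)) h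
    simp only [← C_1, coeff_X_sub_C_mul, one_mul, coeff_sub, coeff_X_mul, coeff_C,
      if_neg (Nat.succ_ne_zero _), sub_zero, coeff_descPoly_sub hi] at this
    exact this
  refine ⟨?_, fun i hi₁ hi₂ => ?_, ?_⟩
  · simpa [coeff_descPoly_of_lt] using hsucc 0 (Nat.zero_le D)
  · have := hsucc i hi₂
    rw [show D - i + 1 = D - (i - 1) by omega, coeff_descPoly_sub (by omega)] at this
    rw [← this]
    ring
  · have := congrArg (coeff · 0) h
    simp only [sub_mul, one_mul, coeff_sub, coeff_X_mul_zero, coeff_C_zero, zero_sub,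
      neg_inj] at this
    rwa [← Nat.sub_self D, coeff_descPoly_sub le_rfl] at this

lemma fpoly_eq_descPoly (n : ℕ) : fpoly n = descPoly ((n - 1) / 2) (fun i => (pcount n i : ℚ)) :=
  rfl

lemma fpoly_two_mul_add_three (D : ℕ) : fpoly (2 * D + 3) = (X + 1) * fpoly (2 * D + 2) := by
  rw [fpoly_eq_descPoly, fpoly_eq_descPoly, show (2 * D + 3 - 1) / 2 = D + 1 by omega,
    show (2 * D + 2 - 1) / 2 = D by omega]
  refine descPoly_succ_eq_X_add_one_mul ?_ (fun k hk => ?_) ?_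
  · simp only [pcount_zero_right]
  · exact_mod_cast pcount_succ_succ (n := 2 * D + 2) (by omega)
  · exact_mod_cast pcount_eq_zero (by omega) (by omega)

lemma X_mul_fpoly_two_mul_add_two (D : ℕ) :
    X * fpoly (2 * D + 2) = (X + 1) * fpoly (2 * D + 1) - C (catalan D : ℚ) := by
  rw [fpoly_eq_descPoly, fpoly_eq_descPoly, show (2 * D + 2 - 1) / 2 = D by omega,
    show (2 * D + 1 - 1) / 2 = D by omega, eq_sub_iff_add_eq]
  -- `b` is `p_{2D+2, ·}` with its vanishing top entry replaced by `p_{2D+1, D} = c_D`, so that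
  -- Pascal's rule holds up to index `D + 1`
  obtain ⟨b, hb_top, hb⟩ : ∃ b : ℕ → ℚ,
      b (D + 1) = catalan D ∧ ∀ k ≠ D + 1, b k = pcount (2 * D + 2) k :=
    ⟨Function.update _ (D + 1) _, Function.update_self .., fun k hk => Function.update_of_ne hk ..⟩
  have hpascal :
      descPoly (D + 1) b = (X + 1) * descPoly D (fun k => (pcount (2 * D + 1) k : ℚ)) := by
    refine descPoly_succ_eq_X_add_one_mul ?_ (fun k hk => ?_) ?_
    · rw [hb 0 (by omega), pcount_zero_right, pcount_zero_right]
    · rcases hk.lt_or_eq with hk | rfl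
      · rw [hb (k + 1) (by omega)]
        exact_mod_cast pcount_succ_succ (n := 2 * D + 1) (by omega)
      · rw [hb_top, pcount_eq_zero (by omega) (by omega), pcount_two_mul_add_one]
        simp
    · exact_mod_cast pcount_eq_zero (by omega) (by omega)
  rw [← hpascal, descPoly_succ, hb_top, descPoly_congr fun i hi => hb i (by omega)]

lemma fpoly_comp_two_mul_add_three (D : ℕ) :
    (fpoly (2 * D + 3)).comp (X - 1) = X * (fpoly (2 * D + 2)).comp (X - 1) := by
  rw [fpoly_two_mul_add_three, mul_comp, add_comp, X_comp, one_comp, sub_add_cancel]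

lemma fpoly_comp_two_mul_add_two (D : ℕ) :
    (X - 1) * (fpoly (2 * D + 2)).comp (X - 1) =
      X * (fpoly (2 * D + 1)).comp (X - 1) - C (catalan D : ℚ) := by
  have := congrArg (·.comp (X - 1)) (X_mul_fpoly_two_mul_add_two D)
  simpa only [mul_comp, sub_comp, add_comp, X_comp, one_comp, C_comp, sub_add_cancel] using this

lemma cast_catalan_eq_choose_div (D : ℕ) :
    (catalan D : ℚ) = ((2 * D).choose D : ℚ) / ((D : ℚ) + 1) := by
  rw [eq_div_iff (by positivity), ← Nat.centralBinom_eq_two_mul_choose,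
    ← succ_mul_catalan_eq_centralBinom]
  push_cast
  ring

/-- Corollary 3.8: recurrence for the h-vector of `P_n` (with `ε(n) = 1` for odd `n`,
`ε(n) = 0` for even `n`, and `c_m = C(2m, m)/(m+1)` the Catalan numbers), with
initial conditions `h_{3,0} = 1`, `h_{3,1} = 0`. -/
theorem Pn_h_vector_recurrence (n : ℕ) (hn : 3 ≤ n) (h : ℕ → ℕ → ℚ)
    (hdef : ∀ m : ℕ, 3 ≤ m → (fpoly m).comp (Polynomial.X - 1) =
      ∑ i ∈ Finset.range ((m - 1) / 2 + 1),
        Polynomial.C (h m i) * Polynomial.X ^ ((m - 1) / 2 - i)) :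
    h 3 0 = 1 ∧ h 3 1 = 0 ∧
    h (n + 1) 0 = h n 0 ∧
    (∀ i : ℕ, 1 ≤ i → i + 1 ≤ n / 2 →
      h (n + 1) i = h n i + (if Odd n then 1 else 0) * h (n + 1) (i - 1)) ∧
    h (n + 1) (n / 2) =
      (if Odd n then 1 else 0) *
        ((Nat.choose (2 * (n / 2)) (n / 2) : ℚ) / (((n / 2 : ℕ) : ℚ) + 1)) := by
  have hQ : ∀ m, 3 ≤ m → (fpoly m).comp (X - 1) = descPoly ((m - 1) / 2) (h m) := hdef
  have hQ₂ : (fpoly 2).comp (X - 1) = descPoly 0 (fun _ => (1 : ℚ)) := by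
    simp [fpoly_eq_descPoly, descPoly, pcount_zero_right]
  obtain ⟨h₃, h₃top⟩ := eq_of_descPoly_succ_eq_X_mul (D := 0) (b := h 3)
    (by rw [← hQ 3 le_rfl, ← hQ₂]; exact fpoly_comp_two_mul_add_three 0)
  refine ⟨h₃ 0 le_rfl, h₃top, ?_⟩
  rcases Nat.even_or_odd n with hev | hodd
  · obtain ⟨D, rfl⟩ : ∃ D, n = 2 * D + 2 := ⟨n / 2 - 1, by rw [Nat.even_iff] at hev; omega⟩
    have hrel := fpoly_comp_two_mul_add_three D
    rw [hQ _ (by omega), hQ _ hn, show (2 * D + 3 - 1) / 2 = D + 1 by omega,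
      show (2 * D + 2 - 1) / 2 = D by omega] at hrel
    obtain ⟨hlow, htop⟩ := eq_of_descPoly_succ_eq_X_mul hrel
    simp only [if_neg (Nat.not_odd_iff_even.2 hev), zero_mul, add_zero,
      show (2 * D + 2) / 2 = D + 1 by omega]
    exact ⟨hlow 0 (Nat.zero_le D), fun i _ hi => hlow i (by omega), htop⟩
  · obtain ⟨D, rfl⟩ := hodd
    have hrel := fpoly_comp_two_mul_add_two D
    rw [hQ _ (by omega), hQ _ hn, show (2 * D + 2 - 1) / 2 = D by omega,
      show (2 * D + 1 - 1) / 2 = D by omega] at hrel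
    obtain ⟨h0, hmid, htop⟩ := eq_of_X_sub_one_mul_descPoly hrel
    simp only [if_pos (odd_two_mul_add_one D), one_mul, show (2 * D + 1) / 2 = D by omega]
    exact ⟨h0, fun i hi₁ hi₂ => hmid i hi₁ (by omega), htop.trans (cast_catalan_eq_choose_div D)⟩
end
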